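/- Let ν > 0 and let z_1 > ... > z_N > 0 be the zeros of the Laguerre polynomial L_N^{(ν−1)}, and let y ∈ ℝ^N with y_i = √(2 z_i). Then for every c > 0, x(t) := √(t + c²)·y solves the B_N ODE x_i' = Σ_{j≠i}(1/(x_i−x_j)+1/(x_i+x_j)) + ν/x_i. -/

import Mathlib

/-!
The zeros of `L = L_N^{(ν-1)}` satisfy Stieltjes' relation
`2 z_i ∑_{j ≠ i} 1 / (z_i - z_j) = z_i - ν`: evaluate the Laguerre equation
`z L'' + (ν - z) L' + N L = 0` at `z_i` and use `L''(z_i) = 2 L'(z_i) ∑_{j ≠ i} 1 / (z_i - z_j)`,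
which holds for every polynomial with simple zeros. For `x = r y` with `r = √(t + c²)` and
`y_i² = 2 z_i` one has `1 / (x_i - x_j) + 1 / (x_i + x_j) = y_i / (r (z_i - z_j))`, so the
right-hand side of the `B_N` equation collapses to `y_i / (2 r)`, the time derivative of `r y_i`.
-/

open Finset

/-- Elementary symmetric polynomial of degree `k` in the variables `x i`, `i ∈ s`. -/
noncomputable def esymm {N : ℕ} (s : Finset (Fin N)) (k : ℕ) (x : Fin N → ℝ) : ℝ :=
  ∑ A ∈ s.powersetCard k, ∏ i ∈ A, x i

/-- The generalized Laguerre polynomial `L_N^{(α)}`, whose coefficient of `X^k` is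
`(-1)^k / (k! (N-k)!) * ∏_{m=k}^{N-1} (α + m + 1)`. -/
noncomputable def laguerre (α : ℝ) (N : ℕ) : Polynomial ℝ :=
  ∑ k ∈ Finset.range (N + 1),
    Polynomial.C ((-1 : ℝ) ^ k
        / ((Nat.factorial k : ℝ) * (Nat.factorial (N - k) : ℝ))
        * ∏ m ∈ Finset.Ico k N, (α + m + 1)) * Polynomial.X ^ k

open Polynomial Lagrange
open scoped Nat

section Nodal

variable {F ι : Type*} [Field F] {s : Finset ι} {v : ι → F}

theorem eq_C_mul_nodal_of_degree_le {p : F[X]} (hv : Set.InjOn v s) (hp : p.degree ≤ #s)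
    (hroot : ∀ i ∈ s, p.eval (v i) = 0) : p = C (p.coeff #s) * nodal s v := by
  refine eq_of_degree_sub_lt_of_eval_index_eq s hv ?_ fun i hi => ?_
  · rw [degree_lt_iff_coeff_zero]
    intro m hm
    rw [coeff_sub, coeff_C_mul]
    rcases hm.eq_or_lt with rfl | hlt
    · have h1 : (nodal s v).coeff #s = 1 := by
        simpa using (nodal_monic (s := s) (v := v)).coeff_natDegree
      rw [h1, mul_one, sub_self]
    · rw [coeff_eq_zero_of_degree_lt (p := p) (hp.trans_lt (by exact_mod_cast hlt)),
        coeff_eq_zero_of_natDegree_lt (p := nodal s v) (by simpa using hlt), mul_zero, sub_zero]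
  · rw [hroot i hi, eval_mul, eval_nodal_at_node hi, mul_zero]

variable [DecidableEq ι]

theorem eval_derivative_nodal_of_forall_ne {x : F} (hx : ∀ j ∈ s, x ≠ v j) :
    (derivative (nodal s v)).eval x = (nodal s v).eval x * ∑ j ∈ s, 1 / (x - v j) := by
  rw [derivative_nodal, eval_finsetSum, Finset.mul_sum]
  refine Finset.sum_congr rfl fun j hj => ?_
  have hxj : x - v j ≠ 0 := sub_ne_zero.2 (hx j hj)
  rw [nodal_eq_mul_nodal_erase hj, eval_mul]
  simp only [eval_sub, eval_X, eval_C]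
  field_simp

theorem eval_derivative_derivative_nodal_at_node (hv : Set.InjOn v s) {i : ι} (hi : i ∈ s) :
    (derivative (derivative (nodal s v))).eval (v i)
      = 2 * (derivative (nodal s v)).eval (v i) * ∑ j ∈ s.erase i, 1 / (v i - v j) := by
  have hne : ∀ j ∈ s.erase i, v i ≠ v j := fun j hj h =>
    (Finset.ne_of_mem_erase hj) (hv (Finset.mem_of_mem_erase hj) hi h.symm)
  set q := nodal (s.erase i) v
  have hq : derivative (derivative ((X - C (v i)) * q))
      = 2 * derivative q + (X - C (v i)) * derivative (derivative q) := by
    simp only [derivative_mul, derivative_sub, derivative_X, derivative_C, sub_zero, one_mul,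
      derivative_add]
    ring
  rw [eval_nodal_derivative_eval_node_eq hi, mul_assoc,
    ← eval_derivative_nodal_of_forall_ne hne, nodal_eq_mul_nodal_erase hi, hq]
  simp [q]

theorem eval_derivative_nodal_at_node_ne_zero (hv : Set.InjOn v s) {i : ι} (hi : i ∈ s) :
    (derivative (nodal s v)).eval (v i) ≠ 0 := by
  rw [eval_nodal_derivative_eval_node_eq hi]
  exact eval_nodal_not_at_node fun j hj h =>
    (Finset.ne_of_mem_erase hj) (hv (Finset.mem_of_mem_erase hj) hi h.symm)

end Nodal

noncomputable def laguerreCoeff (α : ℝ) (N k : ℕ) : ℝ :=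
  if k ≤ N then (-1 : ℝ) ^ k / ((k ! : ℝ) * ((N - k) ! : ℝ)) * ∏ m ∈ Ico k N, (α + m + 1)
  else 0

theorem coeff_laguerre (α : ℝ) (N k : ℕ) : (laguerre α N).coeff k = laguerreCoeff α N k := by
  simp only [laguerre, laguerreCoeff, finsetSum_coeff, coeff_C_mul, coeff_X_pow, mul_ite,
    mul_one, mul_zero, Finset.sum_ite_eq, Finset.mem_range, Nat.lt_succ_iff]

theorem laguerreCoeff_succ (α : ℝ) (N k : ℕ) :
    ((k : ℝ) + 1) * (α + k + 1) * laguerreCoeff α N (k + 1)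
      = ((k : ℝ) - N) * laguerreCoeff α N k := by
  unfold laguerreCoeff
  rcases lt_trichotomy k N with hlt | rfl | hgt
  · obtain ⟨d, rfl⟩ := Nat.exists_eq_add_of_lt hlt
    rw [if_pos (by omega), if_pos (by omega), ← Finset.insert_Ico_add_one_left_eq_Ico hlt,
      Finset.prod_insert (by simp), show k + d + 1 - k = d + 1 by omega,
      show k + d + 1 - (k + 1) = d by omega, Nat.factorial_succ, Nat.factorial_succ]
    push_cast
    field_simp
    ring
  · simp
  · rw [if_neg (by omega), if_neg (by omega)]
    simp

theorem laguerre_ode (α : ℝ) (N : ℕ) :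
    X * derivative (derivative (laguerre α N)) + (C (α + 1) - X) * derivative (laguerre α N)
      + C (N : ℝ) * laguerre α N = 0 := by
  ext n
  have h := laguerreCoeff_succ α N n
  cases n with
  | zero =>
    simp only [coeff_add, sub_mul, coeff_sub, mul_coeff_zero, coeff_X_zero, zero_mul,
      coeff_C_zero, coeff_derivative, coeff_laguerre, coeff_zero]
    push_cast at h ⊢
    linear_combination h
  | succ m =>
    simp only [coeff_add, sub_mul, coeff_sub, coeff_X_mul, coeff_C_mul, coeff_derivative,
      coeff_laguerre, coeff_zero]
    push_cast at h ⊢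
    linear_combination h

theorem degree_laguerre_le (α : ℝ) (N : ℕ) : (laguerre α N).degree ≤ N := by
  rw [degree_le_iff_coeff_zero]
  intro m hm
  rw [coeff_laguerre, laguerreCoeff, if_neg (by exact_mod_cast hm.not_ge)]

theorem coeff_laguerre_self (α : ℝ) (N : ℕ) : (laguerre α N).coeff N = (-1) ^ N / N ! := by
  simp [coeff_laguerre, laguerreCoeff]

theorem laguerre_eq_C_mul_nodal {α : ℝ} {N : ℕ} {z : Fin N → ℝ} (hz : Function.Injective z)
    (hroot : ∀ i, (laguerre α N).eval (z i) = 0) :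
    laguerre α N = C ((-1 : ℝ) ^ N / N !) * nodal univ z := by
  have h := eq_C_mul_nodal_of_degree_le (p := laguerre α N) (s := univ) hz.injOn
    (by simpa using degree_laguerre_le α N) fun i _ => hroot i
  rwa [card_univ, Fintype.card_fin, coeff_laguerre_self] at h

/-- Stieltjes' electrostatic relation for the zeros of `L_N^{(α)}`. -/
theorem two_mul_sum_one_div_sub_of_laguerre_roots {α : ℝ} {N : ℕ} {z : Fin N → ℝ}
    (hz : Function.Injective z) (hroot : ∀ i, (laguerre α N).eval (z i) = 0) (i : Fin N) :
    2 * z i * ∑ j ∈ univ.erase i, 1 / (z i - z j) = z i - (α + 1) := by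
  have hode := congrArg (eval (z i)) (laguerre_ode α N)
  rw [laguerre_eq_C_mul_nodal hz hroot] at hode
  simp only [derivative_C_mul, eval_add, eval_mul, eval_sub, eval_C, eval_X, eval_zero,
    eval_derivative_derivative_nodal_at_node hz.injOn (mem_univ i),
    eval_nodal_at_node (mem_univ i)] at hode
  have hlead : (-1 : ℝ) ^ N / N ! ≠ 0 := by positivity
  have hfactor : (2 * z i * ∑ j ∈ univ.erase i, 1 / (z i - z j) - (z i - (α + 1)))
      * ((-1) ^ N / N ! * (derivative (nodal univ z)).eval (z i)) = 0 := by
    linear_combination hode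
  have hne := mul_ne_zero hlead (eval_derivative_nodal_at_node_ne_zero hz.injOn (mem_univ i))
  linear_combination (mul_eq_zero.1 hfactor).resolve_right hne

theorem one_div_mul_sub_add_one_div_mul_add {r a b : ℝ} (hr : r ≠ 0) (hab : a ^ 2 ≠ b ^ 2) :
    1 / (r * a - r * b) + 1 / (r * a + r * b) = 2 * a / (r * (a ^ 2 - b ^ 2)) := by
  have hsub : a - b ≠ 0 := fun h => hab (by rw [sub_eq_zero.1 h])
  have hadd : a + b ≠ 0 := fun h => hab (by rw [eq_neg_of_add_eq_zero_left h, neg_sq])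
  rw [← mul_sub, ← mul_add, sq_sub_sq]
  field_simp
  ring

theorem hasDerivAt_sqrt_add_const_mul {a t : ℝ} (ha : 0 < t + a) (y : ℝ) :
    HasDerivAt (fun s => √(s + a) * y) (y / (2 * √(t + a))) t :=
  (((Real.hasDerivAt_sqrt ha.ne').comp t ((hasDerivAt_id t).add_const a)).mul_const y).congr_deriv
    (by ring)

theorem stmt15_general (N : ℕ) (ν : ℝ) (z : Fin N → ℝ) (hz : StrictAnti z)
    (hzpos : ∀ i : Fin N, 0 < z i)
    (hroot : ∀ i : Fin N, (laguerre (ν - 1) N).eval (z i) = 0)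
    (y : Fin N → ℝ) (hy : ∀ i, y i = Real.sqrt (2 * z i))
    (c : ℝ) (hc : 0 < c) :
    ∀ t ∈ Set.Ici (0 : ℝ), ∀ i : Fin N,
      HasDerivAt (fun s => Real.sqrt (s + c ^ 2) * y i)
        (∑ j ∈ Finset.univ.erase i,
            (1 / (Real.sqrt (t + c ^ 2) * y i - Real.sqrt (t + c ^ 2) * y j)
              + 1 / (Real.sqrt (t + c ^ 2) * y i + Real.sqrt (t + c ^ 2) * y j))
          + ν / (Real.sqrt (t + c ^ 2) * y i)) t := by
  intro t ht i
  have htc : 0 < t + c ^ 2 := by have : (0 : ℝ) ≤ t := ht; positivity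
  have hderiv := hasDerivAt_sqrt_add_const_mul htc (y i)
  set r := √(t + c ^ 2)
  have hr : r ≠ 0 := (Real.sqrt_pos.2 htc).ne'
  have hysq (j : Fin N) : y j ^ 2 = 2 * z j := by rw [hy j, Real.sq_sqrt (by linarith [hzpos j])]
  have hyi : y i ≠ 0 := by rw [hy i]; exact (Real.sqrt_pos.2 (by linarith [hzpos i])).ne'
  have hzi : z i ≠ 0 := (hzpos i).ne'
  have hterm : ∀ j ∈ univ.erase i, 1 / (r * y i - r * y j) + 1 / (r * y i + r * y j)
      = y i / r * (1 / (z i - z j)) := fun j hj => by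
    have hzij : z i - z j ≠ 0 := sub_ne_zero.2 fun h => (ne_of_mem_erase hj) (hz.injective h).symm
    rw [one_div_mul_sub_add_one_div_mul_add hr (by rw [hysq, hysq]; contrapose! hzij; linarith),
      hysq, hysq]
    field_simp
  have hstieltjes := two_mul_sum_one_div_sub_of_laguerre_roots hz.injective hroot i
  have hS : ∑ j ∈ univ.erase i, 1 / (z i - z j) = (z i - ν) / (2 * z i) := by
    field_simp; linear_combination hstieltjes
  convert hderiv using 1
  rw [sum_congr rfl hterm, ← mul_sum, hS]
  field_simp
  linear_combination (-ν) * hysq i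

theorem stmt15 (N : ℕ) (ν : ℝ) (hν : 0 < ν) (z : Fin N → ℝ) (hz : StrictAnti z)
    (hzpos : ∀ i : Fin N, 0 < z i)
    (hroot : ∀ i : Fin N, (laguerre (ν - 1) N).eval (z i) = 0)
    (y : Fin N → ℝ) (hy : ∀ i, y i = Real.sqrt (2 * z i))
    (c : ℝ) (hc : 0 < c) :
    ∀ t ∈ Set.Ici (0 : ℝ), ∀ i : Fin N,
      HasDerivAt (fun s => Real.sqrt (s + c ^ 2) * y i)
        (∑ j ∈ Finset.univ.erase i,
            (1 / (Real.sqrt (t + c ^ 2) * y i - Real.sqrt (t + c ^ 2) * y j)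
              + 1 / (Real.sqrt (t + c ^ 2) * y i + Real.sqrt (t + c ^ 2) * y j))
          + ν / (Real.sqrt (t + c ^ 2) * y i)) t :=
  stmt15_general N ν z hz hzpos hroot y hy c hc
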